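/- For every 1 < r < ∞, every measure-preserving transformation τ of a probability space (X, μ), every sequence (f_j) of integrable functions on X, and every λ > 0: μ{x ∈ X : (∑_j (M♯ f_j(x))^r)^{1/r} > λ} ≤ (C_r/λ) ∫_X (∑_j |f_j(x)|^r)^{1/r} dμ(x), where C_r is the constant in the weak type (1,1) Fefferman–Stein inequality on ℝ. -/

import Mathlib

open MeasureTheory ENNReal

noncomputable def ergMax {X : Type*} (τ : X → X) (f : X → ℝ) (x : X) : ℝ≥0∞ :=
  ⨆ n : ℕ, (∑ k ∈ Finset.range (n + 1), ENNReal.ofReal |f (τ^[k] x)|) / (n + 1)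

noncomputable def hlMax (f : ℝ → ℝ) (t : ℝ) : ℝ≥0∞ :=
  ⨆ (a : ℝ) (b : ℝ) (_ : a ≤ t) (_ : t ≤ b) (_ : a < b),
    (∫⁻ y in Set.Icc a b, ENNReal.ofReal |f y|) / ENNReal.ofReal (b - a)

/-!
Calderón transference. Fix a truncation level `L` of the ergodic maximal function and a point
`x`, and spread the orbit values `f j (τ^[k] x)`, `k < N + L`, over `[0, N + L)` as step
functions on `ℝ`. For `k < N` every ergodic average of length `≤ L + 1` at `τ^[k] x` is an
average of the step function over an interval containing `[k, k + 1)`, so the number of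
`k < N` with `τ^[k] x` in the level set is at most the measure of the level set of the
Hardy–Littlewood maximal functions, which the Fefferman–Stein inequality bounds by the sum of
`N + L` values of the `ℓ^r` norm along the orbit. Integrating over `x`, `τ` being measure preserving
gives `N μ(E_L) ≤ (C/λ) (N + L) ∫ ‖f‖_r` for the level set `E_L` of the truncated maximal
function; let `N → ∞`, then `L → ∞`.
-/

theorem ENNReal.tsum_iSup_of_monotone {F : ℕ → ℕ → ℝ≥0∞} (hF : Monotone F) :
    ∑' j, ⨆ L, F L j = ⨆ L, ∑' j, F L j := by
  simp_rw [ENNReal.tsum_eq_iSup_nat, ENNReal.finsetSum_iSup_of_monotone fun j _ _ h => hF h j]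
  exact iSup_comm

theorem ENNReal.le_of_forall_natCast_mul_le_add_mul {a b : ℝ≥0∞} (L : ℕ)
    (h : ∀ N : ℕ, N * a ≤ (N + L) * b) : a ≤ b := by
  rcases eq_or_ne b ∞ with rfl | hb
  · exact le_top
  refine ENNReal.le_of_forall_pos_le_add fun ε hε _ => ?_
  obtain ⟨N, hN⟩ := ENNReal.exists_nat_mul_gt (a := ε) (by simpa using hε.ne')
    (mul_ne_top (natCast_ne_top L) hb)
  have hN0 : (N : ℝ≥0∞) ≠ 0 := by
    rintro h0
    simp [h0] at hN
  refine (ENNReal.mul_le_mul_iff_right hN0 (natCast_ne_top N)).1 ?_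
  calc N * a ≤ (N + L) * b := h N
    _ = N * b + L * b := add_mul _ _ _
    _ ≤ N * b + N * ε := by gcongr
    _ = N * (b + ε) := (mul_add _ _ _).symm

noncomputable def ellNorm (r : ℝ) (F : ℕ → ℝ≥0∞) : ℝ≥0∞ := (∑' j, F j ^ r) ^ (1 / r)

section ellNorm
variable {r : ℝ}

theorem ellNorm_mono (hr : 0 < r) {F G : ℕ → ℝ≥0∞} (h : F ≤ G) : ellNorm r F ≤ ellNorm r G := by
  unfold ellNorm; gcongr with j; exact h j

theorem ellNorm_zero (hr : 0 < r) : ellNorm r 0 = 0 := by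
  simp [ellNorm, hr]

theorem ellNorm_iSup_of_monotone (hr : 0 < r) {F : ℕ → ℕ → ℝ≥0∞} (hF : Monotone F) :
    ellNorm r (fun j => ⨆ L, F L j) = ⨆ L, ellNorm r (F L) := by
  have hrpow : ∀ (s : ℝ) (hs : 0 < s) (G : ℕ → ℝ≥0∞), (⨆ L, G L) ^ s = ⨆ L, G L ^ s :=
    fun s hs G => (ENNReal.orderIsoRpow s hs).map_iSup G
  unfold ellNorm
  simp_rw [hrpow r hr]
  rw [ENNReal.tsum_iSup_of_monotone, hrpow _ (one_div_pos.2 hr)]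
  intro L L' h j
  exact ENNReal.rpow_le_rpow (hF h j) hr.le

end ellNorm

theorem setLIntegral_Ico_natFloor (h : ℕ → ℝ≥0∞) (k n : ℕ) :
    ∫⁻ t in Set.Ico (k : ℝ) (k + n : ℕ), h ⌊t⌋₊ = ∑ m ∈ Finset.range n, h (k + m) := by
  induction n with
  | zero => simp
  | succ n ih =>
    have hfloor : ∀ t ∈ Set.Ico ((k + n : ℕ) : ℝ) (k + (n + 1) : ℕ), h ⌊t⌋₊ = h (k + n) :=
      fun t ht => by
        rw [Nat.floor_eq_on_Ico (k + n) t (by simpa [add_assoc] using ht)]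
    rw [← Set.Ico_union_Ico_eq_Ico (Nat.cast_le.2 (Nat.le_add_right k n))
        (Nat.cast_le.2 (by omega)), lintegral_union measurableSet_Ico
        (Set.Ico_disjoint_Ico_same), ih, setLIntegral_congr_fun measurableSet_Ico hfloor,
      setLIntegral_const, Real.volume_Ico, Finset.sum_range_succ]
    simp

theorem lintegral_indicator_Ico_natFloor (h : ℕ → ℝ≥0∞) (n : ℕ) :
    ∫⁻ t, (Set.Ico 0 (n : ℝ)).indicator (fun t => h ⌊t⌋₊) t = ∑ k ∈ Finset.range n, h k := by
  simpa using setLIntegral_Ico_natFloor h 0 n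

noncomputable def stepFn (M : ℕ) (a : ℕ → ℝ) : ℝ → ℝ :=
  (Set.Ico 0 (M : ℝ)).indicator fun t => a ⌊t⌋₊

noncomputable def truncMax (L : ℕ) (a : ℕ → ℝ) (k : ℕ) : ℝ≥0∞ :=
  ⨆ n ≤ L, (∑ m ∈ Finset.range (n + 1), ENNReal.ofReal |a (k + m)|) / (n + 1)

theorem measurable_stepFn (M : ℕ) (a : ℕ → ℝ) : Measurable (stepFn M a) :=
  (measurable_from_nat.comp Nat.measurable_floor).indicator measurableSet_Ico

theorem truncMax_mono (a : ℕ → ℝ) (k : ℕ) : Monotone fun L => truncMax L a k :=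
  fun _ _ h => biSup_mono fun _ hn => hn.trans h

theorem average_le_hlMax_stepFn (a : ℕ → ℝ) {M k n : ℕ} (hM : k + (n + 1) ≤ M) {t : ℝ}
    (ht : t ∈ Set.Ico (k : ℝ) (k + 1)) :
    (∑ m ∈ Finset.range (n + 1), ENNReal.ofReal |a (k + m)|) / (n + 1)
      ≤ hlMax (stepFn M a) t := by
  set b : ℝ := ((k + (n + 1) : ℕ) : ℝ)
  have hb : (k + 1 : ℝ) ≤ b := by simp [b]
  have hint : ∫⁻ y in Set.Ico (k : ℝ) b, ENNReal.ofReal |stepFn M a y|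
      = ∑ m ∈ Finset.range (n + 1), ENNReal.ofReal |a (k + m)| := by
    rw [← setLIntegral_Ico_natFloor (fun m => ENNReal.ofReal |a m|)]
    refine setLIntegral_congr_fun measurableSet_Ico fun y hy => ?_
    have hyM : y < M := hy.2.trans_le (by simp only [b]; exact_mod_cast hM)
    rw [stepFn, Set.indicator_of_mem (Set.mem_Ico.2 ⟨(Nat.cast_nonneg k).trans hy.1, hyM⟩)]
  have hlen : ENNReal.ofReal (b - k) = n + 1 := by
    rw [show b - k = ((n + 1 : ℕ) : ℝ) by simp [b], ENNReal.ofReal_natCast, Nat.cast_succ]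
  calc (∑ m ∈ Finset.range (n + 1), ENNReal.ofReal |a (k + m)|) / (n + 1)
      = (∫⁻ y in Set.Ico (k : ℝ) b, ENNReal.ofReal |stepFn M a y|) / ENNReal.ofReal (b - k) := by
        rw [hint, hlen]
    _ ≤ (∫⁻ y in Set.Icc (k : ℝ) b, ENNReal.ofReal |stepFn M a y|) / ENNReal.ofReal (b - k) := by
        gcongr
        exact Set.Ico_subset_Icc_self
    _ ≤ hlMax (stepFn M a) t :=
        le_iSup_of_le (k : ℝ) <| le_iSup_of_le b <| le_iSup_of_le ht.1 <|
          le_iSup_of_le (ht.2.le.trans hb) <| le_iSup_of_le (by linarith) le_rfl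

theorem truncMax_le_hlMax_stepFn (a : ℕ → ℝ) {L N k : ℕ} (hk : k < N) {t : ℝ}
    (ht : t ∈ Set.Ico (k : ℝ) (k + 1)) : truncMax L a k ≤ hlMax (stepFn (N + L) a) t :=
  iSup₂_le fun _ hn => average_le_hlMax_stepFn a (by omega) ht

def FeffermanSteinWeak (r C : ℝ) : Prop :=
  ∀ f : ℕ → ℝ → ℝ, (∀ j, Measurable (f j)) → ∀ lam : ℝ, 0 < lam →
    volume {t : ℝ | ENNReal.ofReal lam < ellNorm r fun j => hlMax (f j) t}
      ≤ (ENNReal.ofReal C / ENNReal.ofReal lam) * ∫⁻ t, ellNorm r fun j => ENNReal.ofReal |f j t|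

open Finset in
theorem card_lt_ellNorm_truncMax_le {r C : ℝ} (hFS : FeffermanSteinWeak r C) (hr : 0 < r)
    (a : ℕ → ℕ → ℝ) {lam : ℝ} (hlam : 0 < lam) (L N : ℕ) :
    (#{k ∈ range N | ENNReal.ofReal lam < ellNorm r fun j => truncMax L (a j) k} : ℝ≥0∞)
      ≤ (ENNReal.ofReal C / ENNReal.ofReal lam) *
          ∑ k ∈ range (N + L), ellNorm r fun j => ENNReal.ofReal |a j k| := by
  set u : ℕ → ℝ → ℝ := fun j => stepFn (N + L) (a j)
  set T := {t : ℝ | ENNReal.ofReal lam < ellNorm r fun j => hlMax (u j) t}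
  have hint : ∫⁻ t, (ellNorm r fun j => ENNReal.ofReal |u j t|)
      = ∑ k ∈ range (N + L), ellNorm r fun j => ENNReal.ofReal |a j k| := by
    rw [← lintegral_indicator_Ico_natFloor]
    refine lintegral_congr fun t => ?_
    by_cases ht : t ∈ Set.Ico 0 ((N + L : ℕ) : ℝ)
    · simp only [u, stepFn, Set.indicator_of_mem ht]
    · simp only [u, stepFn, Set.indicator_of_notMem ht, abs_zero, ENNReal.ofReal_zero]
      exact ellNorm_zero hr
  calc _ ≤ volume T := ?_
    _ ≤ _ := hFS u (fun j => measurable_stepFn _ _) lam hlam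
    _ = _ := by rw [hint]
  rw [natCast_card_filter, ← lintegral_indicator_Ico_natFloor]
  refine (lintegral_mono fun t => ?_).trans (lintegral_indicator_one_le T)
  by_cases ht : t ∈ Set.Ico 0 (N : ℝ)
  · have hk : ⌊t⌋₊ < N := (Nat.floor_lt ht.1).2 ht.2
    have htk : t ∈ Set.Ico (⌊t⌋₊ : ℝ) (⌊t⌋₊ + 1) := ⟨Nat.floor_le ht.1, Nat.lt_floor_add_one t⟩
    rw [Set.indicator_of_mem ht]
    split_ifs with hP
    · have hT : t ∈ T :=
        hP.trans_le (ellNorm_mono hr fun j => truncMax_le_hlMax_stepFn (a j) hk htk)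
      simp [hT]
    · exact zero_le
  · simp [ht]

theorem MeasureTheory.MeasurePreserving.lintegral_birkhoffSum {X : Type*} [MeasurableSpace X]
    {μ : Measure X} {τ : X → X} (hτ : MeasurePreserving τ μ μ) {φ : X → ℝ≥0∞}
    (hφ : Measurable φ) (n : ℕ) : ∫⁻ x, birkhoffSum τ φ n x ∂μ = n * ∫⁻ x, φ x ∂μ := by
  simp only [birkhoffSum]
  rw [lintegral_finsetSum (f := fun k x => φ (τ^[k] x)) _
    fun k _ => hφ.comp (hτ.measurable.iterate k)]
  simp [(hτ.iterate _).lintegral_comp hφ]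

theorem MeasureTheory.MeasurePreserving.ae_forall_iterate_eq {X ι β : Type*} [MeasurableSpace X]
    [Countable ι] {μ : Measure X} {τ : X → X} (hτ : MeasurePreserving τ μ μ) {f g : ι → X → β}
    (h : ∀ j, f j =ᵐ[μ] g j) : ∀ᵐ x ∂μ, ∀ j k, f j (τ^[k] x) = g j (τ^[k] x) := by
  simp only [ae_all_iff]
  exact fun j k => (hτ.iterate k).quasiMeasurePreserving.ae_eq_comp (h j)

theorem truncMax_orbit_iterate {X : Type*} (τ : X → X) (f : X → ℝ) (x : X) (L k : ℕ) :
    truncMax L (fun m => f (τ^[m] (τ^[k] x))) 0 = truncMax L (fun m => f (τ^[m] x)) k := by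
  simp [truncMax, ← Function.iterate_add_apply, add_comm]

theorem ergMax_eq_iSup_truncMax {X : Type*} (τ : X → X) (f : X → ℝ) (x : X) :
    ergMax τ f x = ⨆ L, truncMax L (fun m => f (τ^[m] x)) 0 := by
  simp [ergMax, truncMax, biSup_le_eq_iSup]

section Transference
variable {r C : ℝ} {X : Type*} [MeasurableSpace X] {μ : Measure X} {τ : X → X}
  {g : ℕ → X → ℝ} {lam : ℝ}

theorem measure_lt_ellNorm_truncMax_le (hFS : FeffermanSteinWeak r C) (hr : 0 < r)
    (hτ : MeasurePreserving τ μ μ) (hg : ∀ j, Measurable (g j)) (hlam : 0 < lam) (L : ℕ) :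
    μ {x | ENNReal.ofReal lam < ellNorm r fun j => truncMax L (fun m => g j (τ^[m] x)) 0}
      ≤ (ENNReal.ofReal C / ENNReal.ofReal lam) *
          ∫⁻ x, (ellNorm r fun j => ENNReal.ofReal |g j x|) ∂μ := by
  set E := {x | ENNReal.ofReal lam < ellNorm r fun j => truncMax L (fun m => g j (τ^[m] x)) 0}
  set G : X → ℝ≥0∞ := fun x => ellNorm r fun j => ENNReal.ofReal |g j x|
  have hτm := hτ.measurable
  have hE : MeasurableSet E := measurableSet_lt measurable_const <| by
    unfold ellNorm truncMax
    fun_prop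
  have hG : Measurable G := by
    unfold G ellNorm
    fun_prop
  refine ENNReal.le_of_forall_natCast_mul_le_add_mul L fun N => ?_
  have hcount : ∀ x, birkhoffSum τ (E.indicator 1) N x ≤
      (ENNReal.ofReal C / ENNReal.ofReal lam) * birkhoffSum τ G (N + L) x := fun x => by
    simp only [birkhoffSum, E, Set.indicator_apply, Set.mem_ofPred_eq, truncMax_orbit_iterate,
      Pi.one_apply, ← Finset.natCast_card_filter]
    exact card_lt_ellNorm_truncMax_le hFS hr (fun j m => g j (τ^[m] x)) hlam L N
  calc N * μ E = ∫⁻ x, birkhoffSum τ (E.indicator 1) N x ∂μ := by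
        rw [hτ.lintegral_birkhoffSum (measurable_one.indicator hE), lintegral_indicator_one hE]
    _ ≤ ∫⁻ x, (ENNReal.ofReal C / ENNReal.ofReal lam) * birkhoffSum τ G (N + L) x ∂μ :=
        lintegral_mono hcount
    _ = (N + L) * ((ENNReal.ofReal C / ENNReal.ofReal lam) * ∫⁻ x, G x ∂μ) := by
        have hGsum : Measurable (birkhoffSum τ G (N + L)) := by
          unfold birkhoffSum
          fun_prop
        rw [lintegral_const_mul _ hGsum, hτ.lintegral_birkhoffSum hG]
        push_cast
        ring

theorem measure_lt_ellNorm_ergMax_le (hFS : FeffermanSteinWeak r C) (hr : 0 < r)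
    (hτ : MeasurePreserving τ μ μ) (hg : ∀ j, Measurable (g j)) (hlam : 0 < lam) :
    μ {x | ENNReal.ofReal lam < ellNorm r fun j => ergMax τ (g j) x}
      ≤ (ENNReal.ofReal C / ENNReal.ofReal lam) *
          ∫⁻ x, (ellNorm r fun j => ENNReal.ofReal |g j x|) ∂μ := by
  have hunion : {x | ENNReal.ofReal lam < ellNorm r fun j => ergMax τ (g j) x}
      = ⋃ L, {x | ENNReal.ofReal lam <
          ellNorm r fun j => truncMax L (fun m => g j (τ^[m] x)) 0} := by
    ext x
    simp only [ergMax_eq_iSup_truncMax, Set.mem_ofPred_eq, Set.mem_iUnion]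
    rw [ellNorm_iSup_of_monotone (F := fun L j => truncMax L (fun m => g j (τ^[m] x)) 0) hr
      fun L L' h j => truncMax_mono _ _ h, lt_iSup_iff]
  rw [hunion, Monotone.measure_iUnion]
  · exact iSup_le (measure_lt_ellNorm_truncMax_le hFS hr hτ hg hlam)
  · exact fun L L' h x hx => hx.trans_le (ellNorm_mono hr fun j => truncMax_mono _ _ h)

end Transference

theorem ergodic_vector_valued_weak_general (r : ℝ) (hr : 1 < r) (C : ℝ)
    (hFS : ∀ f : ℕ → ℝ → ℝ, (∀ j, Measurable (f j)) → ∀ lam : ℝ, 0 < lam →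
      volume {t : ℝ | ENNReal.ofReal lam < (∑' j, hlMax (f j) t ^ r) ^ (1 / r)}
        ≤ (ENNReal.ofReal C / ENNReal.ofReal lam) *
            ∫⁻ t, (∑' j, ENNReal.ofReal |f j t| ^ r) ^ (1 / r))
    {X : Type*} [MeasurableSpace X] (μ : Measure X)
    (τ : X → X) (hτ : MeasurePreserving τ μ μ)
    (f : ℕ → X → ℝ) (hf : ∀ j, Integrable (f j) μ)
    (lam : ℝ) (hlam : 0 < lam) :
    μ {x : X | ENNReal.ofReal lam < (∑' j, ergMax τ (f j) x ^ r) ^ (1 / r)}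
      ≤ (ENNReal.ofReal C / ENNReal.ofReal lam) *
          ∫⁻ x, (∑' j, ENNReal.ofReal |f j x| ^ r) ^ (1 / r) ∂μ := by
  choose g hg hfg using fun j => (hf j).aemeasurable
  have hfg_orbit := hτ.ae_forall_iterate_eq hfg
  calc μ {x | ENNReal.ofReal lam < (∑' j, ergMax τ (f j) x ^ r) ^ (1 / r)}
      = μ {x | ENNReal.ofReal lam < ellNorm r fun j => ergMax τ (g j) x} :=
        measure_congr <| Filter.eventuallyEq_set.2 <| hfg_orbit.mono fun x hx => by
          simp only [Set.mem_ofPred_eq, ergMax, ellNorm, hx]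
    _ ≤ (ENNReal.ofReal C / ENNReal.ofReal lam) *
          ∫⁻ x, (ellNorm r fun j => ENNReal.ofReal |g j x|) ∂μ :=
        measure_lt_ellNorm_ergMax_le hFS (zero_lt_one.trans hr) hτ hg hlam
    _ = _ := by
        congr 1
        exact lintegral_congr_ae <| hfg_orbit.mono fun x hx => by
          simp only [ellNorm, show ∀ j, f j x = g j x from fun j => hx j 0]

theorem ergodic_vector_valued_weak (r : ℝ) (hr : 1 < r) (C : ℝ) (hC : 0 < C)
    (hFS : ∀ f : ℕ → ℝ → ℝ, (∀ j, Measurable (f j)) → ∀ lam : ℝ, 0 < lam →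
      volume {t : ℝ | ENNReal.ofReal lam < (∑' j, hlMax (f j) t ^ r) ^ (1 / r)}
        ≤ (ENNReal.ofReal C / ENNReal.ofReal lam) *
            ∫⁻ t, (∑' j, ENNReal.ofReal |f j t| ^ r) ^ (1 / r))
    {X : Type*} [MeasurableSpace X] (μ : Measure X) [IsProbabilityMeasure μ]
    (τ : X → X) (hτ : MeasurePreserving τ μ μ)
    (f : ℕ → X → ℝ) (hf : ∀ j, Integrable (f j) μ)
    (lam : ℝ) (hlam : 0 < lam) :
    μ {x : X | ENNReal.ofReal lam < (∑' j, ergMax τ (f j) x ^ r) ^ (1 / r)}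
      ≤ (ENNReal.ofReal C / ENNReal.ofReal lam) *
          ∫⁻ x, (∑' j, ENNReal.ofReal |f j x| ^ r) ^ (1 / r) ∂μ :=
  ergodic_vector_valued_weak_general r hr C hFS μ τ hτ f hf lam hlam
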